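/- Let φ be an LTLf formula over P = X ∪ Y and let G = (2^(X∪Y), S, s₀, δ, F) be a DFA such that s₀ ∉ F and G accepts exactly those nonempty finite words over 2^(X∪Y) which, viewed as finite traces over 2^P, satisfy φ. Let n be such that W_{n+1} = W_n, let τ : S → 2^Y be any function such that (s, τ(s)) ∈ T_n for every s ∈ W_n, and suppose s₀ ∈ W_n. Then the strategy g_τ defined by g_τ(X₀,…,X_{m−1}) = τ(s'_m), where s'₀ = s₀ and s'_{j+1} = δ(s'_j, X_j ∪ τ(s'_j)), witnesses the realizability of φ with respect to ⟨X, Y⟩: for every infinite sequence X₀, X₁, … of subsets of X there exists k ≥ 0 such that the finite trace (X₀ ∪ g_τ(ε)), (X₁ ∪ g_τ(X₀)), …, (X_k ∪ g_τ(X₀,…,X_{k−1})) satisfies φ. -/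

import Mathlib

/-- Syntax of LTLf formulas over atomic propositions `P`. -/
inductive LTLf (P : Type) : Type where
  | tru : LTLf P
  | fls : LTLf P
  | atom : P → LTLf P
  | neg : LTLf P → LTLf P
  | conj : LTLf P → LTLf P → LTLf P
  | next : LTLf P → LTLf P
  | until_ : LTLf P → LTLf P → LTLf P

/-- Satisfaction of an LTLf formula on a finite trace `ρ` (a list of
propositional interpretations) at position `i`. -/
def Sat {P : Type} : LTLf P → List (Set P) → ℕ → Prop
  | .tru, _, _ => True
  | .fls, _, _ => False
  | .atom a, ρ, i => a ∈ ρ.getD i ∅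
  | .neg φ, ρ, i => ¬ Sat φ ρ i
  | .conj φ ψ, ρ, i => Sat φ ρ i ∧ Sat ψ ρ i
  | .next φ, ρ, i => i + 1 < ρ.length ∧ Sat φ ρ (i + 1)
  | .until_ φ ψ, ρ, i =>
      ∃ j, i ≤ j ∧ j < ρ.length ∧ Sat ψ ρ j ∧ ∀ k, i ≤ k → k < j → Sat φ ρ k

/-- Weak next: `Xw φ := ¬ X ¬ φ`. -/
def LTLf.wnext {P : Type} (φ : LTLf P) : LTLf P := .neg (.next (.neg φ))

/-- Release: `φ₁ R φ₂ := ¬ (¬ φ₁ U ¬ φ₂)`. -/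
def LTLf.release {P : Type} (φ ψ : LTLf P) : LTLf P :=
  .neg (.until_ (.neg φ) (.neg ψ))

/-- Eventually: `F φ := ⊤ U φ`. -/
def LTLf.ev {P : Type} (φ : LTLf P) : LTLf P := .until_ .tru φ

/-- Always: `G φ := ⊥ R φ`. -/
def LTLf.alw {P : Type} (φ : LTLf P) : LTLf P := LTLf.release .fls φ

/-- The letter `X' ∪ Y' ∈ 2^(X∪Y)` determined by `X' ⊆ X` and `Y' ⊆ Y`,
where the disjoint union `X ∪ Y` is represented by the sum type `X ⊕ Y`. -/
def join {X Y : Type} (X' : Set X) (Y' : Set Y) : Set (X ⊕ Y) :=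
  {p | Sum.elim (· ∈ X') (· ∈ Y') p}

/-- The fixpoint approximants `(T_i, W_i)` for the DFA game on
`G = (2^(X∪Y), S, s₀, δ, F)`:
`T₀ = F × 2^Y`, `W₀ = F`,
`T_{i+1} = T_i ∪ {(s, Y') : s ∉ W_i and δ(s, X' ∪ Y') ∈ W_i for every X' ⊆ X}`,
`W_{i+1} = {s : (s, Y') ∈ T_{i+1} for some Y' ⊆ Y}`. -/
def TWJ {S X Y : Type} (δ : S → Set (X ⊕ Y) → S) (F : Set S) :
    ℕ → Set (S × Set Y) × Set S
  | 0 => ({p | p.1 ∈ F}, F)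
  | i + 1 =>
      let T := (TWJ δ F i).1
      let W := (TWJ δ F i).2
      let T' := T ∪ {p | p.1 ∉ W ∧ ∀ X' : Set X, δ p.1 (join X' p.2) ∈ W}
      (T', {s | ∃ Y' : Set Y, (s, Y') ∈ T'})

/-- `T_i`. -/
def TsetJ {S X Y : Type} (δ : S → Set (X ⊕ Y) → S) (F : Set S) (i : ℕ) :
    Set (S × Set Y) := (TWJ δ F i).1

/-- `W_i`. -/
def WsetJ {S X Y : Type} (δ : S → Set (X ⊕ Y) → S) (F : Set S) (i : ℕ) :
    Set S := (TWJ δ F i).2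

/-!
`W_i` is the set of states from which the controller can force the DFA into `F` within `i`
steps, and `(s, Y') ∈ T_i` says that playing `Y'` at `s` keeps that promise. A pair enters `T`
only at the stage its state enters `W`, so a move chosen from `T_n` at a state of `W_i` already
lies in `T_i`: from outside `F` it sends every environment move into `W_{i-1}`. Hence the rank of
the current state drops at each step of a play of `τ` until `F` is reached, and `s₀ ∉ F` makes
the accepted prefix nonempty, i.e. a trace satisfying `φ`.
-/

theorem List.foldl_ofFn_succ {α β : Type*} (f : β → α → β) (b : β) (a : ℕ → α) (j : ℕ) :
    (List.ofFn fun m : Fin (j + 1) => a m).foldl f b =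
      f ((List.ofFn fun m : Fin j => a m).foldl f b) (a j) := by
  rw [List.ofFn_succ', List.concat_eq_append, List.foldl_concat]
  rfl

section Approximants

variable {S X Y : Type} (δ : S → Set (X ⊕ Y) → S) (F : Set S)

theorem TsetJ_succ (i : ℕ) :
    TsetJ δ F (i + 1) = TsetJ δ F i ∪
      {p | p.1 ∉ WsetJ δ F i ∧ ∀ X' : Set X, δ p.1 (join X' p.2) ∈ WsetJ δ F i} :=
  rfl

theorem mem_WsetJ {i : ℕ} {s : S} : s ∈ WsetJ δ F i ↔ ∃ Y' : Set Y, (s, Y') ∈ TsetJ δ F i := by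
  cases i with
  | zero => exact ⟨fun h => ⟨∅, h⟩, fun ⟨_, h⟩ => h⟩
  | succ i => rfl

theorem TsetJ_mono : Monotone (TsetJ δ F) :=
  monotone_nat_of_le_succ fun i => by
    rw [TsetJ_succ]
    exact Set.subset_union_left

theorem WsetJ_mono : Monotone (WsetJ δ F) := fun _ _ hij _ hs => by
  obtain ⟨Y', h⟩ := (mem_WsetJ δ F).1 hs
  exact (mem_WsetJ δ F).2 ⟨Y', TsetJ_mono δ F hij h⟩

variable {δ F}

theorem mem_TsetJ_of_mem_WsetJ {j i : ℕ} {s : S} {Y' : Set Y} (hT : (s, Y') ∈ TsetJ δ F j)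
    (hW : s ∈ WsetJ δ F i) : (s, Y') ∈ TsetJ δ F i := by
  induction j with
  | zero => exact TsetJ_mono δ F (Nat.zero_le i) hT
  | succ j ih =>
    rcases hT with hT | hnew
    · exact ih hT
    · rcases Nat.lt_or_ge j i with hji | hij
      · exact TsetJ_mono δ F hji (Or.inr hnew)
      · exact absurd (WsetJ_mono δ F hij hW) hnew.1

end Approximants

section Play

variable {S X Y : Type} (δ : S → Set (X ⊕ Y) → S) (τ : S → Set Y) (s₀ : S) (xs : ℕ → Set X)

def playState (j : ℕ) : S :=
  (List.ofFn fun m : Fin j => xs m).foldl (fun t X' => δ t (join X' (τ t))) s₀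

theorem playState_succ (j : ℕ) :
    playState δ τ s₀ xs (j + 1) =
      δ (playState δ τ s₀ xs j) (join (xs j) (τ (playState δ τ s₀ xs j))) :=
  List.foldl_ofFn_succ _ _ _ j

theorem foldl_ofFn_playState (m : ℕ) :
    (List.ofFn fun j : Fin m => join (xs j) (τ (playState δ τ s₀ xs j))).foldl δ s₀ =
      playState δ τ s₀ xs m := by
  induction m with
  | zero => rfl
  | succ m ih =>
    rw [List.foldl_ofFn_succ (a := fun j => join (xs j) (τ (playState δ τ s₀ xs j))), ih,
      playState_succ]

variable {δ τ s₀}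

theorem exists_playState_mem_of_mem_WsetJ {F : Set S} {n : ℕ}
    (hτ : ∀ s ∈ WsetJ δ F n, (s, τ s) ∈ TsetJ δ F n) {i : ℕ} (hi : i ≤ n) {j : ℕ}
    (hj : playState δ τ s₀ xs j ∈ WsetJ δ F i) :
    ∃ m, j ≤ m ∧ playState δ τ s₀ xs m ∈ F := by
  induction i generalizing j with
  | zero => exact ⟨j, le_rfl, hj⟩
  | succ i ih =>
    have hT := mem_TsetJ_of_mem_WsetJ (hτ _ (WsetJ_mono δ F hi hj)) hj
    rcases hT with hT | ⟨-, hnext⟩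
    · exact ih (by omega) ((mem_WsetJ δ F).2 ⟨_, hT⟩)
    · have hj' : playState δ τ s₀ xs (j + 1) ∈ WsetJ δ F i := by
        rw [playState_succ]
        exact hnext (xs j)
      obtain ⟨m, hjm, hm⟩ := ih (by omega) hj'
      exact ⟨m, by omega, hm⟩

end Play

theorem synthesized_strategy_realizes_general {S X Y : Type}
    (φ : LTLf (X ⊕ Y)) (δ : S → Set (X ⊕ Y) → S) (s₀ : S) (F : Set S)
    (h₀ : s₀ ∉ F)
    (hacc : ∀ w : List (Set (X ⊕ Y)), w ≠ [] →
      (List.foldl δ s₀ w ∈ F ↔ Sat φ w 0))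
    (n : ℕ)
    (τ : S → Set Y) (hτ : ∀ s ∈ WsetJ δ F n, (s, τ s) ∈ TsetJ δ F n)
    (hs₀ : s₀ ∈ WsetJ δ F n) :
    ∀ xs : ℕ → Set X, ∃ k : ℕ,
      Sat φ (List.ofFn fun j : Fin (k + 1) =>
        join (xs j)
          ((fun l : List (Set X) =>
              τ (l.foldl (fun t X' => δ t (join X' (τ t))) s₀))
            (List.ofFn fun m : Fin j.val => xs m))) 0 := by
  intro xs
  obtain ⟨m, -, hm⟩ := exists_playState_mem_of_mem_WsetJ (s₀ := s₀) xs hτ le_rfl (j := 0) hs₀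
  obtain ⟨k, rfl⟩ : ∃ k, m = k + 1 :=
    Nat.exists_eq_add_one_of_ne_zero fun h => h₀ (by rwa [h] at hm)
  refine ⟨k, (hacc _ (by simp)).1 ?_⟩
  rwa [← foldl_ofFn_playState δ τ s₀ xs] at hm

/-- Let `φ` be an LTLf formula over `P = X ∪ Y` (represented as `X ⊕ Y`) and
let `G = (2^(X∪Y), S, s₀, δ, F)` be a DFA such that `s₀ ∉ F` and `G` accepts
exactly those nonempty finite words over `2^(X∪Y)` which, viewed as finite
traces, satisfy `φ`.  Let `n` be such that `W_{n+1} = W_n`, let `τ : S → 2^Y`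
be any function such that `(s, τ(s)) ∈ T_n` for every `s ∈ W_n`, and suppose
`s₀ ∈ W_n`.  Then the strategy `g_τ` defined by `g_τ(X₀,…,X_{m−1}) = τ(s'_m)`,
where `s'₀ = s₀` and `s'_{j+1} = δ(s'_j, X_j ∪ τ(s'_j))`, witnesses the
realizability of `φ` with respect to `⟨X, Y⟩`. -/
theorem synthesized_strategy_realizes {S X Y : Type}
    [Fintype S] [Fintype X] [Fintype Y]
    (φ : LTLf (X ⊕ Y)) (δ : S → Set (X ⊕ Y) → S) (s₀ : S) (F : Set S)
    (h₀ : s₀ ∉ F)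
    (hacc : ∀ w : List (Set (X ⊕ Y)), w ≠ [] →
      (List.foldl δ s₀ w ∈ F ↔ Sat φ w 0))
    (n : ℕ) (hfix : WsetJ δ F (n + 1) = WsetJ δ F n)
    (τ : S → Set Y) (hτ : ∀ s ∈ WsetJ δ F n, (s, τ s) ∈ TsetJ δ F n)
    (hs₀ : s₀ ∈ WsetJ δ F n) :
    ∀ xs : ℕ → Set X, ∃ k : ℕ,
      Sat φ (List.ofFn fun j : Fin (k + 1) =>
        join (xs j)
          ((fun l : List (Set X) =>
              τ (l.foldl (fun t X' => δ t (join X' (τ t))) s₀))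
            (List.ofFn fun m : Fin j.val => xs m))) 0 :=
  synthesized_strategy_realizes_general φ δ s₀ F h₀ hacc n τ hτ hs₀
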